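/- For N-player impartial games (N ≥ 2) under normal play: if the Next player N ∉ o(H), then o(G+H) ⊆ o(G). -/
import Mathlib


inductive IGame : Type where
  | mk : List IGame → IGame

namespace IGame

def opts : IGame → List IGame
  | mk l => l

theorem sizeOf_lt_of_mem {g G : IGame} (h : g ∈ G.opts) : sizeOf g < sizeOf G := by
  cases G with
  | mk l =>
    have h2 : g ∈ l := h
    have := List.sizeOf_lt_of_mem h2
    simp only [mk.sizeOf_spec]
    omega

def add : IGame → IGame → IGame
  | G, H =>
    mk ((G.opts.attach.map fun g => add g.1 H) ++ (H.opts.attach.map fun h => add G h.1))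
termination_by G H => sizeOf G + sizeOf H
decreasing_by
  · have := sizeOf_lt_of_mem g.2; omega
  · have := sizeOf_lt_of_mem h.2; omega

/-- `outN n G i` : player `Oᵢ` (with `O₀ = Next` and `O_{n-1} = Previous`) has a
winning strategy in the `n`-player impartial game `G` under normal play. -/
def outN : (n : ℕ) → IGame → Fin n → Prop
  | n+1, G, i =>
    if i.val = 0 then
      ∃ g : {x // x ∈ G.opts}, outN (n+1) g.1 ⟨n, Nat.lt_succ_self n⟩
    else
      ∀ g : {x // x ∈ G.opts}, outN (n+1) g.1 ⟨i.val - 1, Nat.lt_of_le_of_lt (Nat.sub_le _ _) i.isLt⟩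
termination_by n G i => sizeOf G
decreasing_by
  all_goals exact sizeOf_lt_of_mem g.2

theorem outN_zero {n : ℕ} {G : IGame} (h0 : 0 < n + 1) :
    outN (n+1) G ⟨0, h0⟩ ↔ ∃ g ∈ G.opts, outN (n+1) g ⟨n, Nat.lt_succ_self n⟩ := by
  rw [outN]
  simp only [if_pos rfl]
  exact ⟨fun ⟨g, h⟩ => ⟨g.1, g.2, h⟩, fun ⟨g, hm, h⟩ => ⟨⟨g, hm⟩, h⟩⟩

theorem outN_pos {n : ℕ} {G : IGame} {j : ℕ} (hj : j + 1 < n + 1) :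
    outN (n+1) G ⟨j+1, hj⟩ ↔ ∀ g ∈ G.opts, outN (n+1) g ⟨j, by omega⟩ := by
  rw [outN]
  simp only [if_neg (Nat.succ_ne_zero j)]
  constructor
  · intro h g hg
    have := h ⟨g, hg⟩
    simpa using this
  · intro h g
    simpa using h g.1 g.2

theorem mem_add_opts {G H K : IGame} :
    K ∈ (add G H).opts ↔ (∃ g ∈ G.opts, K = add g H) ∨ ∃ h ∈ H.opts, K = add G h := by
  rw [add]
  simp only [opts, List.mem_append, List.mem_map, List.mem_attach, true_and]
  constructor
  · rintro (⟨g, rfl⟩ | ⟨h, rfl⟩)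
    · exact Or.inl ⟨g.1, g.2, rfl⟩
    · exact Or.inr ⟨h.1, h.2, rfl⟩
  · rintro (⟨g, hg, rfl⟩ | ⟨h, hh, rfl⟩)
    · exact Or.inl ⟨⟨g, hg⟩, rfl⟩
    · exact Or.inr ⟨⟨h, hh⟩, rfl⟩

mutual

theorem lemA (n : ℕ) (G H : IGame) (hH : ¬ outN (n+1) H ⟨0, Nat.succ_pos n⟩) :
    ∀ i : Fin (n+1), outN (n+1) (add G H) i → outN (n+1) G i := by
  intro i hw
  obtain ⟨iv, hiv⟩ := i
  match iv with
  | 0 =>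
    rw [outN_zero] at hw ⊢
    obtain ⟨K, hK, hKw⟩ := hw
    rw [mem_add_opts] at hK
    rcases hK with ⟨g, hg, rfl⟩ | ⟨h, hh, rfl⟩
    · have hgsz := sizeOf_lt_of_mem hg
      exact ⟨g, hg, (by
        rcases n with _ | m
        · exact lemA 0 g H hH ⟨0, Nat.succ_pos 0⟩ hKw
        · exact lemA (m+1) g H hH ⟨m+1, Nat.lt_succ_self _⟩ hKw)⟩
    · have hhsz := sizeOf_lt_of_mem hh
      have hhn : ¬ outN (n+1) h ⟨n, Nat.lt_succ_self n⟩ := by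
        intro hc
        exact hH ((outN_zero (Nat.succ_pos n)).mpr ⟨h, hh, hc⟩)
      have := lemC n G h n (Nat.lt_succ_self n) hKw hhn
      rw [outN_zero] at this
      exact this
  | j + 1 =>
    rw [outN_pos] at hw ⊢
    intro g hg
    have hgsz := sizeOf_lt_of_mem hg
    have hmem : add g H ∈ (add G H).opts := mem_add_opts.mpr (Or.inl ⟨g, hg, rfl⟩)
    exact lemA n g H hH ⟨j, by omega⟩ (hw _ hmem)
termination_by (sizeOf G + sizeOf H) * 2
decreasing_by all_goals omega

theorem lemC (n : ℕ) (G h : IGame) (j : ℕ) (hj : j < n + 1)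
    (hw : outN (n+1) (add G h) ⟨j, hj⟩) (hh : ¬ outN (n+1) h ⟨j, hj⟩) :
    outN (n+1) G ⟨0, Nat.succ_pos n⟩ := by
  match j with
  | 0 => exact lemA n G h hh ⟨0, Nat.succ_pos n⟩ hw
  | k + 1 =>
    rw [outN_pos] at hw hh
    push_neg at hh
    obtain ⟨h', hh', hh'n⟩ := hh
    have hsz := sizeOf_lt_of_mem hh'
    have hmem : add G h' ∈ (add G h).opts := mem_add_opts.mpr (Or.inr ⟨h', hh', rfl⟩)
    exact lemC n G h' k (by omega) (hw _ hmem) hh'n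
termination_by (sizeOf G + sizeOf h) * 2 + 1
decreasing_by all_goals omega

end

/-- (N-player Next Generation) If the Next player has no winning strategy in
`H`, then every player with a winning strategy in `G+H` also has one in `G`. -/
theorem next_generation_nplayer (n : ℕ) (hn : 2 ≤ n) (G H : IGame)
    (h : ¬ outN n H ⟨0, by omega⟩) :
    ∀ i : Fin n, outN n (add G H) i → outN n G i := by
  obtain ⟨m, rfl⟩ : ∃ m, n = m + 1 := ⟨n - 1, by omega⟩
  exact lemA m G H h

end IGame
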